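/- Let H be a real Hilbert space and f : H → H a map which is monotone, i.e. ⟪f(x) − f(y), x − y⟫ ≤ 0 for all x, y ∈ H, and hemicontinuous, i.e. for all x, y ∈ H the map t ↦ f(x + t·y) from ℝ to H is continuous. Then f is maximal monotone in the following sense: whenever x₀ ∈ H and y₀ ∈ H satisfy ⟪y₀ − f(z), x₀ − z⟫ ≤ 0 for all z ∈ H, one has y₀ = f(x₀). -/

import Mathlib

open RealInnerProductSpace

/-!
Minty's trick: testing the hypothesis at `z = x₀ - t • w` and dividing by `t > 0` gives
`⟪y₀ - f (x₀ - t • w), w⟫ ≤ 0`; letting `t → 0⁺` along the line (hemicontinuity) yields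
`⟪y₀ - f x₀, w⟫ ≤ 0` for every `w`, and `w = y₀ - f x₀` forces `y₀ = f x₀`.
-/

section

open Set

variable {H : Type*} [NormedAddCommGroup H] [InnerProductSpace ℝ H]

lemma eq_zero_of_forall_inner_nonpos {v : H} (h : ∀ w, ⟪v, w⟫ ≤ 0) : v = 0 :=
  real_inner_self_nonpos.mp (h v)

lemma inner_nonpos_of_continuousWithinAt_Ioi {g : ℝ → H} {w : H}
    (hg : ContinuousWithinAt g (Ioi 0) 0) (h : ∀ t > 0, ⟪g t, w⟫ ≤ 0) : ⟪g 0, w⟫ ≤ 0 :=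
  le_of_tendsto (hg.inner continuousWithinAt_const) (eventually_nhdsWithin_of_forall h)

theorem eq_of_forall_inner_sub_nonpos {f : H → H} {x₀ y₀ : H}
    (hcont : ∀ w, ContinuousWithinAt (fun t : ℝ => f (x₀ + t • w)) (Ioi 0) 0)
    (h : ∀ z, ⟪y₀ - f z, x₀ - z⟫ ≤ 0) : y₀ = f x₀ := by
  refine sub_eq_zero.mp (eq_zero_of_forall_inner_nonpos fun w => ?_)
  have hline : ∀ t : ℝ, t > 0 → ⟪y₀ - f (x₀ + t • -w), w⟫ ≤ 0 := by
    intro t ht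
    have hz := h (x₀ + t • -w)
    rw [show x₀ - (x₀ + t • -w) = t • w by rw [smul_neg]; abel, real_inner_smul_right] at hz
    exact nonpos_of_mul_nonpos_right hz ht
  simpa using inner_nonpos_of_continuousWithinAt_Ioi (g := fun t => y₀ - f (x₀ + t • -w))
    (continuousWithinAt_const.sub (hcont (-w))) hline

end

theorem monotone_hemicontinuous_maximal_general
    {H : Type*} [NormedAddCommGroup H] [InnerProductSpace ℝ H]
    (f : H → H)
    (hhemi : ∀ x y : H, Continuous fun t : ℝ => f (x + t • y)) :
    ∀ x₀ y₀ : H, (∀ z : H, ⟪y₀ - f z, x₀ - z⟫ ≤ 0) → y₀ = f x₀ :=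
  fun x₀ _ => eq_of_forall_inner_sub_nonpos fun w => (hhemi x₀ w).continuousWithinAt

/-- A monotone hemicontinuous operator on a Hilbert space is maximal monotone:
if `⟪y₀ - f z, x₀ - z⟫ ≤ 0` for all `z`, then `y₀ = f x₀`. -/
theorem monotone_hemicontinuous_maximal
    {H : Type*} [NormedAddCommGroup H] [InnerProductSpace ℝ H]
    (f : H → H) (hf : ∀ x y : H, ⟪f x - f y, x - y⟫ ≤ 0)
    (hhemi : ∀ x y : H, Continuous fun t : ℝ => f (x + t • y)) :
    ∀ x₀ y₀ : H, (∀ z : H, ⟪y₀ - f z, x₀ - z⟫ ≤ 0) → y₀ = f x₀ :=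
  monotone_hemicontinuous_maximal_general f hhemi
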